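/- Fix integers g₀ ≥ 1 and g ≥ λ = 2g₀, let M₀ = [[0, Id_{g₀}],[Id_{g₀}, 0]], and let M be the g × g block-diagonal matrix with blocks M₀ and 0. Let τ = (1/2)M + iT with T real symmetric positive definite. Then there exists a point x₀ ∈ ℝ^g with θ(x₀, τ) > 0 and a point z₀ ∈ i·ℝ^g with θ(z₀, τ) > 0, where θ is the Riemann theta function. -/

import Mathlib

open Matrix

/-- The Riemann theta function. -/
noncomputable def theta {g : ℕ} (z : Fin g → ℂ) (τ : Matrix (Fin g) (Fin g) ℂ) : ℂ :=
  ∑' m : Fin g → ℤ,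
    Complex.exp (Real.pi * Complex.I *
        ((fun i => (m i : ℂ)) ⬝ᵥ τ.mulVec (fun i => (m i : ℂ))) +
      2 * Real.pi * Complex.I * ((fun i => (m i : ℂ)) ⬝ᵥ z))

/-- The standard orthosymmetric matrix of size `g` with `λ = 2 * l0`. -/
def Mstd (g l0 : ℕ) : Matrix (Fin g) (Fin g) ℤ :=
  Matrix.of fun i j =>
    if ((i : ℕ) + l0 = (j : ℕ) ∧ (j : ℕ) < 2 * l0) ∨
       ((j : ℕ) + l0 = (i : ℕ) ∧ (i : ℕ) < 2 * l0) then 1 else 0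

namespace Stmt11

variable (g0 g : ℕ) (h : 2 * g0 ≤ g)

def eI (i : Fin g0) : Fin g := ⟨i.1, by omega⟩
def fI (i : Fin g0) : Fin g := ⟨i.1 + g0, by omega⟩

/-- extension of a vector to ℕ by zero -/
def ext0 (v : Fin g → ℤ) : ℕ → ℤ := fun k => if hk : k < g then v ⟨k, hk⟩ else 0

include h

lemma ext0_eI (v : Fin g → ℤ) (i : Fin g0) : ext0 g v i.1 = v (eI g0 g h i) := by
  have : (i : ℕ) < g := by omega
  simp [ext0, eI, this]

lemma ext0_fI (v : Fin g → ℤ) (i : Fin g0) : ext0 g v ((i:ℕ) + g0) = v (fI g0 g h i) := by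
  have : (i : ℕ) + g0 < g := by omega
  simp [ext0, fI, this]

lemma mulVec_Mstd (n : Fin g → ℤ) (a : Fin g) :
    (Mstd g g0 *ᵥ n) a = if (a:ℕ) < g0 then ext0 g n ((a:ℕ) + g0)
      else if (a:ℕ) < 2 * g0 then ext0 g n ((a:ℕ) - g0) else 0 := by
  have key : ∀ b : Fin g, Mstd g g0 a b * n b =
      if ((a:ℕ) + g0 = (b:ℕ) ∧ (b:ℕ) < 2*g0) ∨ ((b:ℕ) + g0 = (a:ℕ) ∧ (a:ℕ) < 2*g0)
      then n b else 0 := by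
    intro b
    simp only [Mstd, of_apply, ite_mul, one_mul, zero_mul]
  rw [mulVec, dotProduct, Finset.sum_congr rfl (fun b _ => key b)]
  rcases lt_or_ge (a:ℕ) g0 with ha | ha
  · rw [if_pos ha]
    have hb : (a:ℕ) + g0 < g := by omega
    rw [Finset.sum_eq_single_of_mem (⟨(a:ℕ) + g0, hb⟩ : Fin g) (Finset.mem_univ _)]
    · rw [if_pos (Or.inl ⟨rfl, by show (a:ℕ) + g0 < 2*g0; omega⟩)]
      simp [ext0, hb]
    · intro b _ hb2
      rw [if_neg]
      rintro (⟨h1, h2⟩ | ⟨h1, h2⟩)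
      · exact hb2 (Fin.ext (by simpa using h1.symm))
      · omega
  · rw [if_neg (by omega)]
    rcases lt_or_ge (a:ℕ) (2*g0) with ha2 | ha2
    · rw [if_pos ha2]
      have hb : (a:ℕ) - g0 < g := by omega
      rw [Finset.sum_eq_single_of_mem (⟨(a:ℕ) - g0, hb⟩ : Fin g) (Finset.mem_univ _)]
      · rw [if_pos (Or.inr ⟨by show (a:ℕ) - g0 + g0 = (a:ℕ); omega, ha2⟩)]
        simp [ext0, hb]
      · intro b _ hb2
        rw [if_neg]
        rintro (⟨h1, h2⟩ | ⟨h1, h2⟩)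
        · omega
        · refine hb2 (Fin.ext ?_)
          show (b:ℕ) = (a:ℕ) - g0
          omega
    · rw [if_neg (by omega)]
      apply Finset.sum_eq_zero
      intro b _
      rw [if_neg]
      rintro (⟨h1, h2⟩ | ⟨h1, h2⟩) <;> omega

omit h

/-- `Q m = ∑ m_{e i} m_{f i}` -/
def Qq (m : Fin g → ℤ) : ℤ := ∑ i : Fin g0, m (eI g0 g h i) * m (fI g0 g h i)

/-- `B m n = mᵀ M n` -/
def Bb (m n : Fin g → ℤ) : ℤ :=
  ∑ i : Fin g0, (m (eI g0 g h i) * n (fI g0 g h i) + m (fI g0 g h i) * n (eI g0 g h i))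

include h

lemma Bb_eq_range (m n : Fin g → ℤ) : Bb g0 g h m n =
    ∑ k ∈ Finset.range g0, (ext0 g m k * ext0 g n (k + g0) + ext0 g m (k + g0) * ext0 g n k) := by
  rw [Bb, ← Fin.sum_univ_eq_sum_range
    (fun k : ℕ => ext0 g m k * ext0 g n (k + g0) + ext0 g m (k + g0) * ext0 g n k) g0]
  apply Finset.sum_congr rfl
  intro i _
  rw [ext0_eI g0 g h, ext0_fI g0 g h, ext0_eI g0 g h, ext0_fI g0 g h]

lemma dot_M (m n : Fin g → ℤ) : m ⬝ᵥ (Mstd g g0 *ᵥ n) = Bb g0 g h m n := by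
  have e1 : ∀ a : Fin g, m a * (Mstd g g0 *ᵥ n) a =
      (fun k : ℕ => if k < g0 then ext0 g m k * ext0 g n (k + g0)
        else if k < 2*g0 then ext0 g m k * ext0 g n (k - g0) else 0) (a : ℕ) := by
    intro a
    rw [mulVec_Mstd g0 g h]
    have hm : m a = ext0 g m (a:ℕ) := by simp [ext0]
    beta_reduce
    split_ifs <;> simp [hm]
  rw [dotProduct, Finset.sum_congr rfl (fun a _ => e1 a), Fin.sum_univ_eq_sum_range
    (fun k : ℕ => if k < g0 then ext0 g m k * ext0 g n (k + g0)
        else if k < 2*g0 then ext0 g m k * ext0 g n (k - g0) else 0) g]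
  have hsplit : Finset.range g = Finset.range (2*g0) ∪ Finset.Ico (2*g0) g := by
    rw [Finset.range_eq_Ico, Finset.range_eq_Ico]
    exact (Finset.Ico_union_Ico_eq_Ico (a := 0) (b := 2*g0) (by omega) h).symm
  rw [hsplit, Finset.sum_union (by rw [Finset.range_eq_Ico]; exact Finset.Ico_disjoint_Ico_consecutive 0 (2*g0) g)]
  have h2 : ∑ k ∈ Finset.Ico (2*g0) g, (if k < g0 then ext0 g m k * ext0 g n (k + g0)
      else if k < 2*g0 then ext0 g m k * ext0 g n (k - g0) else 0) = 0 := by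
    apply Finset.sum_eq_zero
    intro k hk
    simp only [Finset.mem_Ico] at hk
    rw [if_neg (by omega), if_neg (by omega)]
  rw [h2, add_zero]
  have hsplit2 : Finset.range (2*g0) = Finset.range g0 ∪ Finset.Ico g0 (2*g0) := by
    rw [Finset.range_eq_Ico, Finset.range_eq_Ico]
    exact (Finset.Ico_union_Ico_eq_Ico (a := 0) (b := g0) (c := 2*g0) (by omega) (by omega)).symm
  rw [hsplit2, Finset.sum_union (by rw [Finset.range_eq_Ico]; exact Finset.Ico_disjoint_Ico_consecutive 0 g0 (2*g0))]
  have e2 : ∑ k ∈ Finset.range g0, (if k < g0 then ext0 g m k * ext0 g n (k + g0)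
      else if k < 2*g0 then ext0 g m k * ext0 g n (k - g0) else 0)
      = ∑ k ∈ Finset.range g0, ext0 g m k * ext0 g n (k + g0) := by
    apply Finset.sum_congr rfl
    intro k hk
    simp only [Finset.mem_range] at hk
    rw [if_pos hk]
  have e3 : ∑ k ∈ Finset.Ico g0 (2*g0), (if k < g0 then ext0 g m k * ext0 g n (k + g0)
      else if k < 2*g0 then ext0 g m k * ext0 g n (k - g0) else 0)
      = ∑ k ∈ Finset.range g0, ext0 g m (k + g0) * ext0 g n k := by
    rw [Finset.sum_Ico_eq_sum_range]
    have h4 : 2*g0 - g0 = g0 := by omega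
    rw [h4]
    apply Finset.sum_congr rfl
    intro k hk
    simp only [Finset.mem_range] at hk
    rw [if_neg (by omega), if_pos (by omega)]
    congr 2
    · omega
    · omega
  rw [e2, e3, Bb_eq_range g0 g h, Finset.sum_add_distrib]

lemma Bb_self (m : Fin g → ℤ) : Bb g0 g h m m = 2 * Qq g0 g h m := by
  rw [Bb, Qq, Finset.mul_sum]
  apply Finset.sum_congr rfl
  intro i _
  ring

lemma Qq_sub (k n : Fin g → ℤ) :
    Qq g0 g h (k - n) = Qq g0 g h k + Qq g0 g h n - Bb g0 g h k n := by
  rw [Qq, Qq, Qq, Bb, ← Finset.sum_add_distrib, ← Finset.sum_sub_distrib]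
  apply Finset.sum_congr rfl
  intro i _
  simp only [Pi.sub_apply]
  ring

end Stmt11

lemma summable_gauss_int {c : ℝ} (hc : 0 < c) :
    Summable fun x : ℤ => Real.exp (-c * (x:ℝ)^2) := by
  have hnat : Summable fun n : ℕ => Real.exp (-c * (n:ℝ)^2) := by
    apply Summable.of_nonneg_of_le (fun n => (Real.exp_pos _).le)
      (fun n => ?_) (summable_geometric_of_lt_one (Real.exp_pos (-c)).le
        (Real.exp_lt_one_iff.2 (by linarith)))
    rw [← Real.exp_nat_mul]
    apply Real.exp_le_exp.2
    have hcast : (n:ℝ) ≤ (n:ℝ)^2 := by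
      rcases Nat.eq_zero_or_pos n with h0 | h0
      · simp [h0]
      · have h1 : (1:ℝ) ≤ (n:ℝ) := by exact_mod_cast h0
        nlinarith
    nlinarith
  apply Summable.of_nat_of_neg <;> simpa using hnat

lemma summable_gauss_pi (d : ℕ) {c : ℝ} (hc : 0 < c) :
    Summable fun m : Fin d → ℤ => Real.exp (-c * ∑ i, ((m i : ℝ))^2) := by
  induction d with
  | zero => exact .of_finite
  | succ d ih =>
      rw [← Equiv.summable_iff (Fin.consEquiv fun _ : Fin (d+1) => ℤ)]
      have key : ∀ p : ℤ × (Fin d → ℤ),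
          Real.exp (-c * (p.1:ℝ)^2) * Real.exp (-c * ∑ i, ((p.2 i : ℝ))^2)
          = Real.exp (-c * ∑ i, (((Fin.consEquiv (fun _ : Fin (d+1) => ℤ)) p i : ℝ))^2) := by
        intro p
        rw [← Real.exp_add]
        congr 1
        rw [Fin.sum_univ_succ]
        simp only [Fin.consEquiv_apply, Fin.cons_zero, Fin.cons_succ]
        ring
      exact ((summable_gauss_int hc).mul_of_nonneg ih
        (fun x => (Real.exp_pos _).le) (fun x => (Real.exp_pos _).le)).congr key

lemma posdef_bound {g : ℕ} (hg : 0 < g) (T : Matrix (Fin g) (Fin g) ℝ) (hTpos : T.PosDef) :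
    ∃ ε : ℝ, 0 < ε ∧ ∀ x : Fin g → ℝ, ε * ∑ i, (x i)^2 ≤ x ⬝ᵥ T *ᵥ x := by
  classical
  let f : EuclideanSpace ℝ (Fin g) → ℝ := fun x => (fun i => x i) ⬝ᵥ T *ᵥ (fun i => x i)
  have hf : Continuous f := by
    show Continuous fun x : EuclideanSpace ℝ (Fin g) => ∑ i, x i * ∑ j, T i j * x j
    apply continuous_finset_sum
    intro i _
    apply Continuous.mul
    · exact (continuous_apply i).comp (PiLp.continuous_ofLp 2 (fun _ : Fin g => ℝ))
    · apply continuous_finset_sum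
      intro j _
      exact continuous_const.mul ((continuous_apply j).comp
        (PiLp.continuous_ofLp 2 (fun _ : Fin g => ℝ)))
  have hne : (Metric.sphere (0 : EuclideanSpace ℝ (Fin g)) 1).Nonempty := by
    refine ⟨EuclideanSpace.single ⟨0, hg⟩ (1:ℝ), ?_⟩
    simp only [Metric.mem_sphere, dist_zero_right, EuclideanSpace.norm_single, norm_one]
  obtain ⟨u, hu, hmin⟩ := (isCompact_sphere (0 : EuclideanSpace ℝ (Fin g)) 1).exists_isMinOn
    hne hf.continuousOn
  have hunorm : ‖u‖ = 1 := by simpa using hu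
  have hu0 : u ≠ 0 := by
    intro h0
    rw [h0] at hunorm
    simp at hunorm
  have hεpos : 0 < f u :=
    by have := hTpos.dotProduct_mulVec_pos (x := fun i => u i) (fun h0 => hu0 (by ext i; exact congrFun h0 i)); exact this
  refine ⟨f u, hεpos, ?_⟩
  intro x
  by_cases hx : (x : Fin g → ℝ) = 0
  · subst hx
    simp [dotProduct, mulVec]
  · set v : EuclideanSpace ℝ (Fin g) := WithLp.toLp 2 x with hv
    have hvne : v ≠ 0 := fun h0 => hx (by simpa [hv] using congrArg WithLp.ofLp h0)
    have hr : 0 < ‖v‖ := norm_pos_iff.2 hvne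
    have humem : (‖v‖⁻¹ • v : EuclideanSpace ℝ (Fin g)) ∈
        Metric.sphere (0 : EuclideanSpace ℝ (Fin g)) 1 := by
      simp only [Metric.mem_sphere, dist_zero_right, norm_smul, norm_inv, norm_norm]
      field_simp
    have hle := hmin humem
    have hfv : f (‖v‖⁻¹ • v) = ‖v‖⁻¹ * (‖v‖⁻¹ * f v) := by
      show ((‖v‖⁻¹ • fun i => x i) ⬝ᵥ T *ᵥ (‖v‖⁻¹ • fun i => x i)) = _
      rw [smul_dotProduct, mulVec_smul, dotProduct_smul, smul_eq_mul, smul_eq_mul]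
    have hnormsq : ‖v‖^2 = ∑ i, (x i)^2 := by
      rw [EuclideanSpace.norm_eq, Real.sq_sqrt (by positivity)]
      apply Finset.sum_congr rfl
      intro i _
      rw [Real.norm_eq_abs, sq_abs]
    have hle2 : f u ≤ ‖v‖⁻¹ * (‖v‖⁻¹ * f v) := by
      rw [← hfv]; exact hle
    have hfvx : f v = x ⬝ᵥ T *ᵥ x := rfl
    rw [← hnormsq, ← hfvx]
    have h2 : f u * ‖v‖^2 ≤ ‖v‖⁻¹ * (‖v‖⁻¹ * f v) * ‖v‖^2 := by
      apply mul_le_mul_of_nonneg_right hle2 (by positivity)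
    calc f u * ‖v‖^2 ≤ ‖v‖⁻¹ * (‖v‖⁻¹ * f v) * ‖v‖^2 := h2
      _ = f v := by
        field_simp

lemma neg_one_zpow_sum {ι : Type*} (s : Finset ι) (f : ι → ℤ) :
    (-1:ℝ)^(∑ i ∈ s, f i) = ∏ i ∈ s, (-1:ℝ)^(f i) := by
  induction s using Finset.cons_induction with
  | empty => simp
  | cons a s ha ih => rw [Finset.sum_cons, Finset.prod_cons, zpow_add₀ (by norm_num), ih]

lemma neg_one_zpow_abs (k : ℤ) : |(-1:ℝ)^k| = 1 := by
  rcases Int.even_or_odd k with hk | hk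
  · rw [hk.neg_one_zpow]; norm_num
  · rw [hk.neg_one_zpow]; norm_num

lemma even_of_neg_one_zpow_pos {k : ℤ} (hk : 0 < 1 + (-1:ℝ)^k) : Even k := by
  rcases Int.even_or_odd k with h | h
  · exact h
  · rw [h.neg_one_zpow] at hk; norm_num at hk

lemma inner1 (a b : ℤ) :
    (∑ p : Fin 2 × Fin 2, (-1:ℝ)^(b*((p.1:ℕ):ℤ)) * (-1:ℝ)^(a*((p.2:ℕ):ℤ)))
    = (1+(-1:ℝ)^b)*(1+(-1:ℝ)^a) := by
  rw [Fintype.sum_prod_type, Fin.sum_univ_two, Fin.sum_univ_two, Fin.sum_univ_two]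
  norm_num
  ring

lemma inner2 (a b : ℤ) :
    (∑ p : Fin 2 × Fin 2,
      (-1:ℝ)^(((p.1:ℕ):ℤ)*((p.2:ℕ):ℤ) + (b*((p.1:ℕ):ℤ) + a*((p.2:ℕ):ℤ))))
    = 2 * (-1:ℝ)^(a*b) := by
  rw [Fintype.sum_prod_type, Fin.sum_univ_two, Fin.sum_univ_two, Fin.sum_univ_two]
  norm_num
  rw [zpow_add₀ (by norm_num : (-1:ℝ) ≠ 0), zpow_add₀ (by norm_num : (-1:ℝ) ≠ 0), zpow_one]
  rcases Int.even_or_odd a with ha | ha <;> rcases Int.even_or_odd b with hb | hb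
  · rw [ha.neg_one_zpow, hb.neg_one_zpow, (hb.mul_left a).neg_one_zpow]; norm_num
  · rw [ha.neg_one_zpow, hb.neg_one_zpow, (ha.mul_right b).neg_one_zpow]; norm_num
  · rw [ha.neg_one_zpow, hb.neg_one_zpow, (hb.mul_left a).neg_one_zpow]; norm_num
  · rw [ha.neg_one_zpow, hb.neg_one_zpow, (ha.mul hb).neg_one_zpow]; norm_num

namespace Stmt11

variable (g0 g : ℕ) (h : 2 * g0 ≤ g)

/-- the 0-1 vector parametrized by pairs -/
def nn (ν : Fin g0 → Fin 2 × Fin 2) : Fin g → ℤ := fun j =>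
  if h1 : (j:ℕ) < g0 then (((ν ⟨j.1, h1⟩).1 : ℕ) : ℤ)
  else if h2 : (j:ℕ) < 2*g0 then (((ν ⟨j.1 - g0, by omega⟩).2 : ℕ) : ℤ) else 0

lemma nn_eI (ν : Fin g0 → Fin 2 × Fin 2) (i : Fin g0) :
    nn g0 g ν (eI g0 g h i) = (((ν i).1 : ℕ) : ℤ) := by
  have h1 : (i : ℕ) < g0 := i.2
  simp only [nn, eI, Fin.eta]
  exact dif_pos h1

lemma nn_fI (ν : Fin g0 → Fin 2 × Fin 2) (i : Fin g0) :
    nn g0 g ν (fI g0 g h i) = (((ν i).2 : ℕ) : ℤ) := by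
  have h1 : ¬ ((i : ℕ) + g0 < g0) := by omega
  have h2 : (i : ℕ) + g0 < 2*g0 := by omega
  simp only [nn, fI, dif_neg h1, dif_pos h2, Nat.add_sub_cancel, Fin.eta]

lemma Qq_nn (ν : Fin g0 → Fin 2 × Fin 2) :
    Qq g0 g h (nn g0 g ν) = ∑ i : Fin g0, (((ν i).1 : ℕ) : ℤ) * (((ν i).2 : ℕ) : ℤ) := by
  rw [Qq]
  exact Finset.sum_congr rfl fun i _ => by rw [nn_eI g0 g h, nn_fI g0 g h]

lemma Bb_nn (m : Fin g → ℤ) (ν : Fin g0 → Fin 2 × Fin 2) :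
    Bb g0 g h m (nn g0 g ν) = ∑ i : Fin g0,
      (m (eI g0 g h i) * (((ν i).2 : ℕ) : ℤ) + m (fI g0 g h i) * (((ν i).1 : ℕ) : ℤ)) := by
  rw [Bb]
  exact Finset.sum_congr rfl fun i _ => by rw [nn_eI g0 g h, nn_fI g0 g h]

section withT

variable (T : Matrix (Fin g) (Fin g) ℝ)

/-- quadratic form -/
def QT (m : Fin g → ℤ) : ℝ := (fun i => (m i : ℝ)) ⬝ᵥ T *ᵥ (fun i => (m i : ℝ))

/-- bilinear form -/
def BT (m n : Fin g → ℤ) : ℝ := (fun i => (m i : ℝ)) ⬝ᵥ T *ᵥ (fun i => (n i : ℝ))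

/-- the Gaussian weight -/
noncomputable def Phi (m : Fin g → ℤ) : ℝ := Real.exp (-(Real.pi * QT g T m))

lemma phi_pos (m : Fin g → ℤ) : 0 < Phi g T m := Real.exp_pos _

lemma summable_phi (hg : 0 < g) (hTpos : T.PosDef) : Summable (Phi g T) := by
  obtain ⟨ε, hε, hbound⟩ := posdef_bound hg T hTpos
  apply Summable.of_nonneg_of_le (fun m => (phi_pos g T m).le) (fun m => ?_)
    (summable_gauss_pi g (c := Real.pi * ε) (by positivity))
  rw [Phi, Real.exp_le_exp]
  have := hbound (fun i => ((m i : ℝ)))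
  rw [QT]
  nlinarith [Real.pi_pos]

lemma summable_mul_phi (hg : 0 < g) (hTpos : T.PosDef) (c : (Fin g → ℤ) → ℝ) (C : ℝ)
    (hC : ∀ m, |c m| ≤ C) : Summable (fun m => c m * Phi g T m) := by
  apply Summable.of_norm
  apply Summable.of_nonneg_of_le (fun m => norm_nonneg _) (fun m => ?_)
    ((summable_phi g T hg hTpos).mul_left C)
  rw [Real.norm_eq_abs, abs_mul, abs_of_pos (phi_pos g T m)]
  exact mul_le_mul_of_nonneg_right (hC m) (phi_pos g T m).le

/-- the term of the `A` series -/
noncomputable def Aterm (n m : Fin g → ℤ) : ℝ := (-1:ℝ)^(Qq g0 g h m + Bb g0 g h m n) * Phi g T m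

/-- the `A` series -/
noncomputable def Aa (n : Fin g → ℤ) : ℝ := ∑' m, Aterm g0 g h T n m

include h

lemma summable_Aterm (hg0 : 1 ≤ g0) (hTpos : T.PosDef) (n : Fin g → ℤ) :
    Summable (Aterm g0 g h T n) :=
  summable_mul_phi g T (by omega) hTpos _ 1 (fun m => (neg_one_zpow_abs _).le)

/-- the key character-sum lower bound -/
lemma csum_ge (m : Fin g → ℤ) : (2:ℝ)^g0 ≤
    ∑ ν : Fin g0 → Fin 2 × Fin 2,
      (1 + (-1:ℝ)^(Qq g0 g h (nn g0 g ν))) * (-1:ℝ)^(Qq g0 g h m + Bb g0 g h m (nn g0 g ν)) := by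
  classical
  have expand : ∀ ν : Fin g0 → Fin 2 × Fin 2,
      (1 + (-1:ℝ)^(Qq g0 g h (nn g0 g ν))) * (-1:ℝ)^(Qq g0 g h m + Bb g0 g h m (nn g0 g ν))
      = (-1:ℝ)^(Qq g0 g h m) * (-1:ℝ)^(Bb g0 g h m (nn g0 g ν))
        + (-1:ℝ)^(Qq g0 g h m) * (-1:ℝ)^(Qq g0 g h (nn g0 g ν) + Bb g0 g h m (nn g0 g ν)) := by
    intro ν
    rw [zpow_add₀ (by norm_num : (-1:ℝ) ≠ 0), zpow_add₀ (by norm_num : (-1:ℝ) ≠ 0)]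
    ring
  rw [Finset.sum_congr rfl (fun ν _ => expand ν), Finset.sum_add_distrib,
    ← Finset.mul_sum, ← Finset.mul_sum]
  -- second sum: equals 2^g0 * (-1)^(Qq m)
  have hP2 : (∑ ν : Fin g0 → Fin 2 × Fin 2,
      (-1:ℝ)^(Qq g0 g h (nn g0 g ν) + Bb g0 g h m (nn g0 g ν)))
      = (2:ℝ)^g0 * (-1:ℝ)^(Qq g0 g h m) := by
    set F : Fin g0 → Fin 2 × Fin 2 → ℝ := fun i p =>
      (-1:ℝ)^(((p.1:ℕ):ℤ)*((p.2:ℕ):ℤ) +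
        (m (fI g0 g h i)*((p.1:ℕ):ℤ) + m (eI g0 g h i)*((p.2:ℕ):ℤ))) with hFdef
    have e1 : ∀ ν : Fin g0 → Fin 2 × Fin 2,
        (-1:ℝ)^(Qq g0 g h (nn g0 g ν) + Bb g0 g h m (nn g0 g ν))
        = ∏ i : Fin g0, F i (ν i) := by
      intro ν
      rw [Qq_nn g0 g h, Bb_nn g0 g h, ← Finset.sum_add_distrib, neg_one_zpow_sum]
      refine Finset.prod_congr rfl fun i _ => ?_
      rw [hFdef]
      beta_reduce
      ring_nf
    have hfact := Finset.prod_univ_sum (fun _ : Fin g0 => (Finset.univ : Finset (Fin 2 × Fin 2))) F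
    rw [Fintype.piFinset_univ] at hfact
    rw [Finset.sum_congr rfl (fun ν _ => e1 ν), ← hfact]
    have e2 : ∀ i : Fin g0, (∑ p : Fin 2 × Fin 2, F i p)
        = 2 * (-1:ℝ)^(m (eI g0 g h i) * m (fI g0 g h i)) :=
      fun i => inner2 (m (eI g0 g h i)) (m (fI g0 g h i))
    rw [Finset.prod_congr rfl (fun i _ => e2 i), Finset.prod_mul_distrib,
      Finset.prod_const, ← neg_one_zpow_sum, ← Qq]
    simp [Finset.card_univ]
  -- first sum: equals (-1)^Qm * ∏ nonneg, and that product is 0 unless Qm even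
  have hP1 : (∑ ν : Fin g0 → Fin 2 × Fin 2, (-1:ℝ)^(Bb g0 g h m (nn g0 g ν)))
      = ∏ i : Fin g0, ((1+(-1:ℝ)^(m (fI g0 g h i))) * (1+(-1:ℝ)^(m (eI g0 g h i)))) := by
    set G : Fin g0 → Fin 2 × Fin 2 → ℝ := fun i p =>
      (-1:ℝ)^(m (fI g0 g h i)*((p.1:ℕ):ℤ)) * (-1:ℝ)^(m (eI g0 g h i)*((p.2:ℕ):ℤ)) with hGdef
    have e1 : ∀ ν : Fin g0 → Fin 2 × Fin 2,
        (-1:ℝ)^(Bb g0 g h m (nn g0 g ν)) = ∏ i : Fin g0, G i (ν i) := by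
      intro ν
      rw [Bb_nn g0 g h, neg_one_zpow_sum]
      refine Finset.prod_congr rfl fun i _ => ?_
      rw [hGdef]
      beta_reduce
      rw [← zpow_add₀ (by norm_num : (-1:ℝ) ≠ 0)]
      ring_nf
    have hfact := Finset.prod_univ_sum (fun _ : Fin g0 => (Finset.univ : Finset (Fin 2 × Fin 2))) G
    rw [Fintype.piFinset_univ] at hfact
    rw [Finset.sum_congr rfl (fun ν _ => e1 ν), ← hfact]
    exact Finset.prod_congr rfl fun i _ => inner1 (m (eI g0 g h i)) (m (fI g0 g h i))
  rw [hP1, hP2]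
  have hsq : (-1:ℝ)^(Qq g0 g h m) * ((2:ℝ)^g0 * (-1:ℝ)^(Qq g0 g h m)) = (2:ℝ)^g0 := by
    have : (-1:ℝ)^(Qq g0 g h m) * (-1:ℝ)^(Qq g0 g h m) = 1 := by
      rw [← zpow_add₀ (by norm_num : (-1:ℝ) ≠ 0)]
      exact Even.neg_one_zpow ⟨Qq g0 g h m, rfl⟩
    calc (-1:ℝ)^(Qq g0 g h m) * ((2:ℝ)^g0 * (-1:ℝ)^(Qq g0 g h m))
        = ((-1:ℝ)^(Qq g0 g h m) * (-1:ℝ)^(Qq g0 g h m)) * (2:ℝ)^g0 := by ring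
      _ = (2:ℝ)^g0 := by rw [this, one_mul]
  rw [hsq]
  have hfirst : 0 ≤ (-1:ℝ)^(Qq g0 g h m) *
      ∏ i : Fin g0, ((1+(-1:ℝ)^(m (fI g0 g h i))) * (1+(-1:ℝ)^(m (eI g0 g h i)))) := by
    have hfac : ∀ k : ℤ, 0 ≤ 1 + (-1:ℝ)^k := by
      intro k
      rcases Int.even_or_odd k with hk | hk
      · rw [hk.neg_one_zpow]; norm_num
      · rw [hk.neg_one_zpow]; norm_num
    rcases Int.even_or_odd (Qq g0 g h m) with hq | hq
    · rw [hq.neg_one_zpow, one_mul]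
      exact Finset.prod_nonneg fun i _ => mul_nonneg (hfac _) (hfac _)
    · -- odd case: some factor vanishes
      have : ∃ i : Fin g0, Odd (m (eI g0 g h i) * m (fI g0 g h i)) := by
        by_contra hodd
        push_neg at hodd
        have : Even (Qq g0 g h m) := by
          rw [Qq]
          apply Finset.even_sum
          intro i _
          exact Int.not_odd_iff_even.1 (hodd i)
        exact (Int.not_odd_iff_even.2 this) hq
      obtain ⟨i, hi⟩ := this
      rw [Int.odd_mul] at hi
      have hzero : (1+(-1:ℝ)^(m (fI g0 g h i))) * (1+(-1:ℝ)^(m (eI g0 g h i))) = 0 := by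
        rw [hi.2.neg_one_zpow]
        ring
      rw [Finset.prod_eq_zero (Finset.mem_univ i) hzero, mul_zero]
  linarith

/-- existence of a good ν -/
lemma exists_nu (hg0 : 1 ≤ g0) (hTpos : T.PosDef) :
    ∃ ν : Fin g0 → Fin 2 × Fin 2,
      Even (Qq g0 g h (nn g0 g ν)) ∧ 0 < Aa g0 g h T (nn g0 g ν) := by
  classical
  have hg : 0 < g := by omega
  set cfun : (Fin g → ℤ) → ℝ := fun m =>
    ∑ ν : Fin g0 → Fin 2 × Fin 2,
      (1 + (-1:ℝ)^(Qq g0 g h (nn g0 g ν))) * (-1:ℝ)^(Qq g0 g h m + Bb g0 g h m (nn g0 g ν))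
    with hcfun
  have hcbound : ∀ m, |cfun m| ≤ (Fintype.card (Fin g0 → Fin 2 × Fin 2) : ℝ) * 2 := by
    intro m
    calc |cfun m| ≤ ∑ ν : Fin g0 → Fin 2 × Fin 2,
        |(1 + (-1:ℝ)^(Qq g0 g h (nn g0 g ν))) * (-1:ℝ)^(Qq g0 g h m + Bb g0 g h m (nn g0 g ν))| :=
          Finset.abs_sum_le_sum_abs _ _
      _ ≤ ∑ _ν : Fin g0 → Fin 2 × Fin 2, (2:ℝ) := by
          apply Finset.sum_le_sum
          intro ν _
          rw [abs_mul, neg_one_zpow_abs, mul_one]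
          calc |1 + (-1:ℝ)^(Qq g0 g h (nn g0 g ν))| ≤ |(1:ℝ)| + |(-1:ℝ)^(Qq g0 g h (nn g0 g ν))| :=
            abs_add_le _ _
            _ ≤ 2 := by rw [neg_one_zpow_abs]; norm_num
      _ = (Fintype.card (Fin g0 → Fin 2 × Fin 2) : ℝ) * 2 := by
          rw [Finset.sum_const, Finset.card_univ, nsmul_eq_mul]
  have hsummable : Summable (fun m => cfun m * Phi g T m) :=
    summable_mul_phi g T hg hTpos cfun _ hcbound
  have hS : (0:ℝ) < ∑' m : Fin g → ℤ, cfun m * Phi g T m := by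
    refine Summable.tsum_pos hsummable ?_ 0 ?_
    · intro m
      exact mul_nonneg (le_trans (by positivity) (csum_ge g0 g h m)) (phi_pos g T m).le
    · exact mul_pos (lt_of_lt_of_le (by positivity) (csum_ge g0 g h 0)) (phi_pos g T 0)
  have hexchange : (∑' m : Fin g → ℤ, cfun m * Phi g T m)
      = ∑ ν : Fin g0 → Fin 2 × Fin 2,
        (1 + (-1:ℝ)^(Qq g0 g h (nn g0 g ν))) * Aa g0 g h T (nn g0 g ν) := by
    rw [show (fun m => cfun m * Phi g T m) = fun m =>
        ∑ ν : Fin g0 → Fin 2 × Fin 2,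
          (1 + (-1:ℝ)^(Qq g0 g h (nn g0 g ν))) * Aterm g0 g h T (nn g0 g ν) m from ?_]
    · rw [Summable.tsum_finsetSum (fun ν _ => ((summable_Aterm g0 g h T hg0 hTpos _).mul_left _))]
      refine Finset.sum_congr rfl fun ν _ => ?_
      rw [Aa, tsum_mul_left]
    · funext m
      rw [hcfun, Finset.sum_mul]
      refine Finset.sum_congr rfl fun ν _ => ?_
      rw [Aterm]
      ring
  rw [hexchange] at hS
  have := Finset.exists_lt_of_sum_lt (f := fun _ : Fin g0 → Fin 2 × Fin 2 => (0:ℝ))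
    (g := fun ν => (1 + (-1:ℝ)^(Qq g0 g h (nn g0 g ν))) * Aa g0 g h T (nn g0 g ν)) (by simpa using hS)
  obtain ⟨ν, -, hν⟩ := this
  refine ⟨ν, ?_, ?_⟩
  · rcases Int.even_or_odd (Qq g0 g h (nn g0 g ν)) with he | ho
    · exact he
    · rw [ho.neg_one_zpow] at hν
      norm_num at hν
  · rcases Int.even_or_odd (Qq g0 g h (nn g0 g ν)) with he | ho
    · rw [he.neg_one_zpow] at hν
      norm_num at hν
      linarith
    · rw [ho.neg_one_zpow] at hν
      norm_num at hν

omit h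

lemma QT_eq_BT (m : Fin g → ℤ) : QT g T m = BT g T m m := rfl

lemma dot_symm (hT : T.IsSymm) (u v : Fin g → ℝ) : u ⬝ᵥ T *ᵥ v = v ⬝ᵥ T *ᵥ u := by
  rw [Matrix.dotProduct_mulVec u T v]
  have : u ᵥ* T = T *ᵥ u := by
    nth_rewrite 1 [← hT.eq]
    rw [Matrix.vecMul_transpose]
  rw [this, dotProduct_comm]

lemma cast_add_vec (m n : Fin g → ℤ) :
    (fun i => ((m + n) i : ℝ)) = (fun i => (m i : ℝ)) + (fun i => (n i : ℝ)) := by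
  funext i
  simp only [Pi.add_apply]
  push_cast
  ring

lemma QT_add (hT : T.IsSymm) (m n : Fin g → ℤ) :
    QT g T (m + n) = QT g T m + 2 * BT g T m n + QT g T n := by
  rw [QT, BT, QT, QT, cast_add_vec, mulVec_add, add_dotProduct, dotProduct_add,
    dotProduct_add]
  have hsym : (fun i => ((n i : ℝ))) ⬝ᵥ T *ᵥ (fun i => (m i : ℝ))
      = (fun i => ((m i : ℝ))) ⬝ᵥ T *ᵥ (fun i => (n i : ℝ)) := dot_symm g T hT _ _
  rw [hsym]
  ring

lemma dot_mulVec_castZ (M : Matrix (Fin g) (Fin g) ℤ) (u v : Fin g → ℤ) :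
    ((fun i => (u i : ℂ)) ⬝ᵥ (M.map (fun k : ℤ => (k:ℂ))) *ᵥ (fun i => (v i : ℂ)))
    = ((u ⬝ᵥ M *ᵥ v : ℤ) : ℂ) := by
  simp only [dotProduct, mulVec, Matrix.map_apply]
  push_cast
  rfl

lemma dot_mulVec_castR (u v : Fin g → ℤ) :
    ((fun i => (u i : ℂ)) ⬝ᵥ (T.map (fun t : ℝ => (t:ℂ))) *ᵥ (fun i => (v i : ℂ)))
    = ((BT g T u v : ℝ) : ℂ) := by
  rw [BT]
  simp only [dotProduct, mulVec, Matrix.map_apply]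
  push_cast
  rfl

include h

lemma tau_dot (τ : Matrix (Fin g) (Fin g) ℂ)
    (hτ : τ = (1 / 2 : ℂ) • (Mstd g g0).map (fun k : ℤ => (k : ℂ)) +
      Complex.I • T.map (fun t : ℝ => (t : ℂ))) (m : Fin g → ℤ) :
    ((fun i => (m i : ℂ)) ⬝ᵥ τ *ᵥ (fun i => (m i : ℂ)))
    = (Qq g0 g h m : ℂ) + Complex.I * ((QT g T m : ℝ) : ℂ) := by
  rw [hτ, add_mulVec, smul_mulVec, smul_mulVec, dotProduct_add,
    dotProduct_smul, dotProduct_smul, dot_mulVec_castZ, dot_mulVec_castR,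
    dot_M g0 g h m m, Bb_self g0 g h m, ← QT_eq_BT g T m]
  push_cast
  rw [smul_eq_mul, smul_eq_mul]
  ring

/-- value of theta at the real half-period point -/
lemma theta_real (hg0 : 1 ≤ g0) (hTpos : T.PosDef) (n : Fin g → ℤ)
    (τ : Matrix (Fin g) (Fin g) ℂ)
    (hτ : τ = (1 / 2 : ℂ) • (Mstd g g0).map (fun k : ℤ => (k : ℂ)) +
      Complex.I • T.map (fun t : ℝ => (t : ℂ))) :
    theta (fun i => (((fun j => (((Mstd g g0 *ᵥ n) j : ℤ) : ℝ)/2) i : ℝ) : ℂ)) τ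
    = ((Aa g0 g h T n : ℝ) : ℂ) := by
  have hterm : ∀ m : Fin g → ℤ,
      Complex.exp (Real.pi * Complex.I *
        ((fun i => (m i : ℂ)) ⬝ᵥ τ *ᵥ (fun i => (m i : ℂ))) +
        2 * Real.pi * Complex.I *
          ((fun i => (m i : ℂ)) ⬝ᵥ (fun i => (((fun j => (((Mstd g g0 *ᵥ n) j : ℤ) : ℝ)/2) i : ℝ) : ℂ))))
      = ((Aterm g0 g h T n m : ℝ) : ℂ) := by
    intro m
    have hz : ((fun i => (m i : ℂ)) ⬝ᵥ (fun i => (((fun j => (((Mstd g g0 *ᵥ n) j : ℤ) : ℝ)/2) i : ℝ) : ℂ)))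
        = ((Bb g0 g h m n : ℤ) : ℂ) / 2 := by
      rw [← dot_M g0 g h m n]
      simp only [dotProduct, mulVec]
      push_cast
      rw [Finset.sum_div]
      exact Finset.sum_congr rfl fun i _ => by ring
    rw [tau_dot g0 g h T τ hτ m, hz]
    have hexp : (Real.pi : ℂ) * Complex.I * ((Qq g0 g h m : ℂ) + Complex.I * ((QT g T m : ℝ) : ℂ)) +
        2 * Real.pi * Complex.I * (((Bb g0 g h m n : ℤ) : ℂ) / 2)
        = ((Qq g0 g h m + Bb g0 g h m n : ℤ) : ℂ) * (Real.pi * Complex.I) +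
          ((-(Real.pi * QT g T m) : ℝ) : ℂ) := by
      push_cast
      linear_combination ((Real.pi : ℂ) * ((QT g T m : ℝ) : ℂ)) * Complex.I_sq
    rw [hexp, Complex.exp_add, Complex.exp_int_mul, Complex.exp_pi_mul_I,
      ← Complex.ofReal_exp]
    rw [Aterm, Phi]
    push_cast [Complex.ofReal_zpow]
    norm_num
  rw [theta, tsum_congr hterm]
  exact ((summable_Aterm g0 g h T hg0 hTpos n).hasSum.mapL Complex.ofRealCLM).tsum_eq

/-- value of theta at the imaginary point -/
lemma theta_imag (hg0 : 1 ≤ g0) (hT : T.IsSymm) (hTpos : T.PosDef) (n : Fin g → ℤ)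
    (hn : Even (Qq g0 g h n))
    (τ : Matrix (Fin g) (Fin g) ℂ)
    (hτ : τ = (1 / 2 : ℂ) • (Mstd g g0).map (fun k : ℤ => (k : ℂ)) +
      Complex.I • T.map (fun t : ℝ => (t : ℂ))) :
    theta (fun i => (((fun j => (T *ᵥ (fun i => (n i : ℝ))) j) i : ℝ) : ℂ) * Complex.I) τ
    = ((Real.exp (Real.pi * QT g T n) * Aa g0 g h T n : ℝ) : ℂ) := by
  set y : Fin g → ℝ := fun j => (T *ᵥ (fun i => (n i : ℝ))) j with hy
  set H : (Fin g → ℤ) → ℝ := fun k => (-1:ℝ)^(Qq g0 g h (k - n)) * Phi g T k with hH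
  have hHsummable : Summable H :=
    summable_mul_phi g T (by omega) hTpos _ 1 (fun m => (neg_one_zpow_abs _).le)
  have hterm : ∀ m : Fin g → ℤ,
      Complex.exp (Real.pi * Complex.I *
        ((fun i => (m i : ℂ)) ⬝ᵥ τ *ᵥ (fun i => (m i : ℂ))) +
        2 * Real.pi * Complex.I *
          ((fun i => (m i : ℂ)) ⬝ᵥ (fun i => ((y i : ℝ) : ℂ) * Complex.I)))
      = ((Real.exp (Real.pi * QT g T n) * H (m + n) : ℝ) : ℂ) := by
    intro m
    have hz : ((fun i => (m i : ℂ)) ⬝ᵥ (fun i => ((y i : ℝ) : ℂ) * Complex.I))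
        = ((BT g T m n : ℝ) : ℂ) * Complex.I := by
      rw [BT]
      simp only [dotProduct, hy, mulVec]
      push_cast
      rw [Finset.sum_mul]
      exact Finset.sum_congr rfl fun i _ => by ring
    rw [tau_dot g0 g h T τ hτ m, hz]
    have hexp : (Real.pi : ℂ) * Complex.I * ((Qq g0 g h m : ℂ) + Complex.I * ((QT g T m : ℝ) : ℂ)) +
        2 * Real.pi * Complex.I * (((BT g T m n : ℝ) : ℂ) * Complex.I)
        = ((Qq g0 g h m : ℤ) : ℂ) * (Real.pi * Complex.I) +
          ((-(Real.pi * (QT g T m + 2 * BT g T m n)) : ℝ) : ℂ) := by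
      push_cast
      linear_combination ((Real.pi : ℂ) * ((QT g T m : ℝ) : ℂ) +
        2 * (Real.pi : ℂ) * ((BT g T m n : ℝ) : ℂ)) * Complex.I_sq
    rw [hexp, Complex.exp_add, Complex.exp_int_mul, Complex.exp_pi_mul_I,
      ← Complex.ofReal_exp]
    have hQTadd : QT g T m + 2 * BT g T m n = QT g T (m + n) - QT g T n := by
      rw [QT_add g T hT m n]; ring
    have hHval : H (m + n) = (-1:ℝ)^(Qq g0 g h m) * Phi g T (m + n) := by
      rw [hH]
      beta_reduce
      rw [add_sub_cancel_right]
    rw [hHval, Phi]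
    have hexp2 : Real.exp (-(Real.pi * (QT g T m + 2 * BT g T m n)))
        = Real.exp (Real.pi * QT g T n) * Real.exp (-(Real.pi * QT g T (m + n))) := by
      rw [← Real.exp_add, hQTadd]
      ring_nf
    rw [hexp2]
    push_cast [Complex.ofReal_zpow]
    ring
  rw [theta, tsum_congr hterm]
  have hsum2 : Summable (fun m : Fin g → ℤ => Real.exp (Real.pi * QT g T n) * H (m + n)) := by
    apply Summable.mul_left
    exact ((Equiv.addRight n).summable_iff (f := H)).2 hHsummable
  have htsum : (∑' m : Fin g → ℤ, Real.exp (Real.pi * QT g T n) * H (m + n))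
      = Real.exp (Real.pi * QT g T n) * Aa g0 g h T n := by
    rw [tsum_mul_left]
    congr 1
    rw [show (fun m : Fin g → ℤ => H (m + n)) = fun m => H ((Equiv.addRight n) m) from rfl]
    rw [Equiv.tsum_eq (Equiv.addRight n) H]
    rw [Aa]
    apply tsum_congr
    intro k
    rw [hH, Aterm]
    beta_reduce
    congr 1
    have hQsub : Qq g0 g h (k - n) = (Qq g0 g h k + Bb g0 g h k n) + (Qq g0 g h n - 2 * Bb g0 g h k n) := by
      rw [Qq_sub g0 g h k n]; ring
    rw [hQsub, zpow_add₀ (by norm_num : (-1:ℝ) ≠ 0),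
      (hn.sub ⟨Bb g0 g h k n, two_mul _⟩).neg_one_zpow, mul_one]
  rw [← htsum]
  exact (hsum2.hasSum.mapL Complex.ofRealCLM).tsum_eq

end withT

end Stmt11

theorem stmt11 (g0 g : ℕ) (hg0 : 1 ≤ g0) (hg : 2 * g0 ≤ g)
    (T : Matrix (Fin g) (Fin g) ℝ) (hT : T.IsSymm) (hTpos : T.PosDef)
    (τ : Matrix (Fin g) (Fin g) ℂ)
    (hτ : τ = (1 / 2 : ℂ) • (Mstd g g0).map (fun n : ℤ => (n : ℂ)) +
      Complex.I • T.map (fun t : ℝ => (t : ℂ))) :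
    (∃ x : Fin g → ℝ,
      (theta (fun i => (x i : ℂ)) τ).im = 0 ∧ 0 < (theta (fun i => (x i : ℂ)) τ).re) ∧
    (∃ y : Fin g → ℝ,
      (theta (fun i => (y i : ℂ) * Complex.I) τ).im = 0 ∧
        0 < (theta (fun i => (y i : ℂ) * Complex.I) τ).re) := by
  obtain ⟨ν, hEven, hA⟩ := Stmt11.exists_nu g0 g hg T hg0 hTpos
  constructor
  · refine ⟨fun j => (((Mstd g g0 *ᵥ Stmt11.nn g0 g ν) j : ℤ) : ℝ)/2, ?_, ?_⟩
    · rw [Stmt11.theta_real g0 g hg T hg0 hTpos (Stmt11.nn g0 g ν) τ hτ]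
      exact Complex.ofReal_im _
    · rw [Stmt11.theta_real g0 g hg T hg0 hTpos (Stmt11.nn g0 g ν) τ hτ]
      rw [Complex.ofReal_re]
      exact hA
  · refine ⟨fun j => (T *ᵥ (fun i => ((Stmt11.nn g0 g ν) i : ℝ))) j, ?_, ?_⟩
    · rw [Stmt11.theta_imag g0 g hg T hg0 hT hTpos (Stmt11.nn g0 g ν) hEven τ hτ]
      exact Complex.ofReal_im _
    · rw [Stmt11.theta_imag g0 g hg T hg0 hT hTpos (Stmt11.nn g0 g ν) hEven τ hτ]
      rw [Complex.ofReal_re]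
      exact mul_pos (Real.exp_pos _) hA
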